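/- Let n, m ≥ 1 be integers and let (x,y) be drawn from D_hard(n,m). Then E[𝗂^{|x|+2|y|}] = 1/2 + (1/2)^{n+1}, where 𝗂 is the imaginary unit, the expectation is taken in the complex numbers, and |x|, |y| denote Hamming weights. -/

import Mathlib

/-!
Condition on `x`. If `|x|` is odd, `y` is uniform and `𝗂 ^ (2|y|) = (-1) ^ |y|` averages to
zero. If `|x| = 2k`, every `y` in the support has `|y| ≡ k (mod 2)`, so `|x| + 2|y| ≡ 4k ≡ 0
(mod 4)` and the summand is `1`. The expectation is therefore `P(|x| even)`, which for
`x ~ U_γ^n` is `(1 + (1 - 2γ)^n) / 2 = 1/2 + (1/2)^(n+1)` at `γ = 1/4`.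
-/

open Finset

def tow : ℕ → ℕ
  | 0 => 1
  | x + 1 => 2 ^ tow x

def hw {ι : Type*} [Fintype ι] (x : ι → Bool) : ℕ :=
  (Finset.univ.filter fun i => x i = true).card

def IsLocal {κ ι : Type*} (d : ℕ) (f : (κ → Bool) → ι → Bool) : Prop :=
  ∀ i : ι, ∃ T : Finset κ, T.card ≤ d ∧
    ∀ x y : κ → Bool, (∀ j ∈ T, x j = y j) → f x i = f y i

def IsProductDist {κ : Type*} [Fintype κ] (p : (κ → Bool) → ℝ) : Prop :=
  ∃ γ : κ → ℝ, (∀ j, 0 ≤ γ j ∧ γ j ≤ 1) ∧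
    ∀ x, p x = ∏ j, if x j then γ j else 1 - γ j

def IsDist {α : Type*} [Fintype α] (p : α → ℝ) : Prop :=
  (∀ a, 0 ≤ p a) ∧ ∑ a, p a = 1

noncomputable def push {α β : Type*} [Fintype α] [DecidableEq β] (f : α → β) (p : α → ℝ) :
    β → ℝ :=
  fun b => ∑ a, if f a = b then p a else 0

noncomputable def tv {α : Type*} [Fintype α] (p q : α → ℝ) : ℝ :=
  (1 / 2) * ∑ a, |p a - q a|

noncomputable def biased {ι : Type*} [Fintype ι] (γ : ℝ) (x : ι → Bool) : ℝ :=
  ∏ i, if x i then γ else 1 - γ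

noncomputable def unifParity (ι : Type*) [Fintype ι] [DecidableEq ι] (b : ℕ)
    (y : ι → Bool) : ℝ :=
  if hw y % 2 = b then
    (1 : ℝ) / ((Finset.univ.filter fun z : ι → Bool => hw z % 2 = b).card : ℝ)
  else 0

noncomputable def dHard (n m : ℕ) (p : (Fin n → Bool) × (Fin m → Bool)) : ℝ :=
  biased (1 / 4) p.1 *
    (if hw p.1 % 2 = 1 then (1 / 2 : ℝ) ^ m
     else unifParity (Fin m) ((hw p.1 / 2) % 2) p.2)

def splitFun (n m : ℕ) (z : Fin (n + m) → Bool) : (Fin n → Bool) × (Fin m → Bool) :=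
  (fun i => z (Fin.castAdd m i), fun j => z (Fin.natAdd n j))

noncomputable def dHard' (n m : ℕ) (z : Fin (n + m) → Bool) : ℝ :=
  dHard n m (splitFun n m z)

def wOf {V : Type*} (Z : V → Bool) : Sym2 V → Bool :=
  Sym2.lift ⟨fun u v => xor (Z u) (Z v), fun u v => Bool.xor_comm _ _⟩

def ip {V : Type*} [Fintype V] (Z X : V → Bool) : ℕ :=
  (Finset.univ.filter fun v => Z v = true ∧ X v = true).card

noncomputable def dHost {V : Type*} [Fintype V] [DecidableEq V] (G : SimpleGraph V)
    [DecidableRel G.Adj] (z : (V ⊕ V ⊕ G.edgeSet) → Bool) : ℝ :=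
  let X : V → Bool := fun v => z (Sum.inl v)
  let Y : V → Bool := fun v => z (Sum.inr (Sum.inl v))
  let W : G.edgeSet → Bool := fun e => z (Sum.inr (Sum.inr e))
  biased (1 / 4) X *
    ∑ Z : V → Bool,
      (1 / 2 : ℝ) ^ (Fintype.card V) *
        (if ∀ e : G.edgeSet, W e = wOf Z e.1 then 1 else 0) *
        (if hw X % 2 = 1 then (1 / 2 : ℝ) ^ (Fintype.card V)
         else unifParity V ((ip Z X + hw X / 2) % 2) Y)

section BooleanCube

variable {ι : Type*} [Fintype ι]

lemma neg_one_pow_hw {R : Type*} [CommRing R] (x : ι → Bool) :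
    (-1 : R) ^ hw x = ∏ i, if x i then -1 else 1 := by
  rw [hw, prod_ite, prod_const, prod_const_one, mul_one]

variable [DecidableEq ι]

lemma sum_prod_bool {R : Type*} [CommSemiring R] (f : ι → Bool → R) :
    ∑ x : ι → Bool, ∏ i, f i (x i) = ∏ i, (f i true + f i false) := by
  simp [← Fintype.prod_sum]

lemma sum_neg_one_pow_hw [Nonempty ι] {R : Type*} [CommRing R] :
    ∑ y : ι → Bool, (-1 : R) ^ hw y = 0 := by
  simp_rw [neg_one_pow_hw]
  rw [sum_prod_bool fun _ b => if b then (-1 : R) else 1]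
  exact prod_eq_zero (mem_univ (Classical.arbitrary ι)) (by simp)

lemma exists_hw_mod_two_eq [Nonempty ι] {b : ℕ} (hb : b < 2) : ∃ y : ι → Bool, hw y % 2 = b := by
  obtain ⟨i₀⟩ := ‹Nonempty ι›
  interval_cases b
  · exact ⟨fun _ => false, by simp [hw]⟩
  · refine ⟨fun i => decide (i = i₀), ?_⟩
    have : (univ.filter fun i => decide (i = i₀) = true) = {i₀} := by ext; simp
    rw [hw, this, card_singleton]

lemma sum_unifParity [Nonempty ι] {b : ℕ} (hb : b < 2) : ∑ y, unifParity ι b y = 1 := by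
  obtain ⟨y₀, hy₀⟩ := exists_hw_mod_two_eq (ι := ι) hb
  have hpos : (0 : ℝ) < (univ.filter fun z : ι → Bool => hw z % 2 = b).card := by
    exact_mod_cast card_pos.mpr ⟨y₀, by simp [hy₀]⟩
  simp only [unifParity]
  rw [sum_ite, sum_const, sum_const_zero, add_zero, nsmul_eq_mul]
  field_simp

lemma sum_biased (γ : ℝ) : ∑ x : ι → Bool, biased γ x = 1 := by
  simp only [biased]
  rw [sum_prod_bool fun _ b => if b then γ else 1 - γ]
  simp

lemma sum_biased_mul_neg_one_pow_hw (γ : ℝ) :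
    ∑ x : ι → Bool, biased γ x * (-1) ^ hw x = (1 - 2 * γ) ^ Fintype.card ι := by
  simp_rw [biased, neg_one_pow_hw, ← prod_mul_distrib]
  rw [sum_prod_bool fun _ b => (if b then γ else 1 - γ) * if b then -1 else 1, ← card_univ,
    ← prod_const]
  congr 1; ext i
  simp only [↓reduceIte, mul_neg, mul_one, Bool.false_eq_true]
  ring

lemma sum_biased_hw_even (γ : ℝ) :
    ∑ x : ι → Bool, (if Even (hw x) then biased γ x else 0) =
      (1 + (1 - 2 * γ) ^ Fintype.card ι) / 2 := by
  have hsplit : ∀ x : ι → Bool,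
      (if Even (hw x) then biased γ x else 0) = (biased γ x + biased γ x * (-1) ^ hw x) / 2 := by
    intro x
    rcases Nat.even_or_odd (hw x) with h | h
    · rw [if_pos h, h.neg_one_pow]; ring
    · rw [if_neg (Nat.not_even_iff_odd.mpr h), h.neg_one_pow]; ring
  rw [sum_congr rfl fun x _ => hsplit x, ← sum_div, sum_add_distrib, sum_biased,
    sum_biased_mul_neg_one_pow_hw]

end BooleanCube

lemma I_pow_add_two_mul_eq_one {a b : ℕ} (ha : a % 2 = 0) (hb : b % 2 = a / 2 % 2) :
    Complex.I ^ (a + 2 * b) = 1 := by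
  obtain ⟨k, hk⟩ : 4 ∣ a + 2 * b := by omega
  rw [hk, pow_mul, Complex.I_pow_four, one_pow]

lemma sum_dHard_mul_I_pow {n m : ℕ} [Nonempty (Fin m)] (x : Fin n → Bool) :
    ∑ y : Fin m → Bool, (dHard n m (x, y) : ℂ) * Complex.I ^ (hw x + 2 * hw y) =
      if Even (hw x) then (biased (1 / 4) x : ℂ) else 0 := by
  rcases Nat.even_or_odd (hw x) with hx | hx
  · have hx₂ : hw x % 2 = 0 := Nat.even_iff.mp hx
    have hterm : ∀ y : Fin m → Bool, (dHard n m (x, y) : ℂ) * Complex.I ^ (hw x + 2 * hw y) =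
        biased (1 / 4) x * unifParity (Fin m) (hw x / 2 % 2) y := by
      intro y
      simp only [dHard, hx₂, zero_ne_one, if_false, Complex.ofReal_mul]
      by_cases hy : hw y % 2 = hw x / 2 % 2
      · rw [I_pow_add_two_mul_eq_one hx₂ hy, mul_one]
      · simp [unifParity, hy]
    rw [if_pos hx, sum_congr rfl fun y _ => hterm y, ← mul_sum, ← Complex.ofReal_sum,
      sum_unifParity (Nat.mod_lt _ two_pos), Complex.ofReal_one, mul_one]
  · calc ∑ y : Fin m → Bool, (dHard n m (x, y) : ℂ) * Complex.I ^ (hw x + 2 * hw y)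
        = (biased (1 / 4) x * (1 / 2) ^ m : ℝ) * Complex.I ^ hw x *
            ∑ y : Fin m → Bool, (-1 : ℂ) ^ hw y := by
          simp only [dHard, Nat.odd_iff.mp hx, if_true, pow_add, pow_mul, Complex.I_sq, mul_sum]
          ring_nf
      _ = if Even (hw x) then (biased (1 / 4) x : ℂ) else 0 := by
          rw [sum_neg_one_pow_hw, mul_zero, if_neg (Nat.not_even_iff_odd.mpr hx)]

theorem stmt8_general (n m : ℕ) (hm : 1 ≤ m) :
    ∑ p : (Fin n → Bool) × (Fin m → Bool),
        (dHard n m p : ℂ) * Complex.I ^ (hw p.1 + 2 * hw p.2) =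
      1 / 2 + (1 / 2 : ℂ) ^ (n + 1) := by
  have : Nonempty (Fin m) := ⟨⟨0, hm⟩⟩
  rw [Fintype.sum_prod_type, sum_congr rfl fun x _ => sum_dHard_mul_I_pow x]
  have hreal := congrArg (fun r : ℝ => (r : ℂ)) (sum_biased_hw_even (ι := Fin n) (1 / 4))
  push_cast [apply_ite] at hreal
  rw [hreal, Fintype.card_fin, pow_succ]
  norm_num
  ring

theorem stmt8 (n m : ℕ) (hn : 1 ≤ n) (hm : 1 ≤ m) :
    ∑ p : (Fin n → Bool) × (Fin m → Bool),
        (dHard n m p : ℂ) * Complex.I ^ (hw p.1 + 2 * hw p.2) =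
      1 / 2 + (1 / 2 : ℂ) ^ (n + 1) :=
  stmt8_general n m hm
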